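/- arXiv:1811.06603 — 2 statements merged into one kernel-verified Lean document; each statement's English description precedes it below -/
import Mathlib

section
/- Let f be a non-negative submodular set function on a finite ground set N with multilinear extension F, let S ⊆ N, and let δ ∈ [0, 1/2]. Then F((1_S ∨ (δ·1_N)) ∧ ((1−δ)·1_N)) ≥ (1 − 2δ) · f(S), i.e., the value of F at the vector whose u-coordinate is 1−δ for u ∈ S and δ for u ∉ S is at least (1 − 2δ)·f(S). -/
/-!
Let `R` be the random set with `u ∈ R` independently with probability `1 - δ` for `u ∈ S` and `δ`
otherwise, so that `F(x) = E f(R)`. Split `R = A ∪ B` with `A ⊆ S` and `B ⊆ Sᶜ`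
independent. Submodularity gives `f(A ∪ B) ≥ f(S ∪ B) + f(A) - f(S)`, and the one-dimensional
sampling inequality `E f(C ∪ X_p) ≥ (1 - p) f(C) + p f(C ∪ X)` for a `p`-random subset `X_p` of
`X` (proved by induction on `X`) bounds both `E f(A)` and `E f(S ∪ B)` below by `(1 - δ) f(S)`,
using `f ≥ 0` on the discarded terms.
-/

open Finset

/-- The multilinear extension of a set function `f` on a finite ground set `N`. -/
noncomputable def multilinearExt {N : Type*} [Fintype N] [DecidableEq N]
    (f : Finset N → ℝ) (x : N → ℝ) : ℝ :=
  ∑ S : Finset N, f S * ((∏ u ∈ S, x u) * ∏ u ∈ Sᶜ, (1 - x u))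

theorem sum_sum_mul_mul_add_sub {ι κ : Type*} {s : Finset ι} {t : Finset κ} {a : ι → ℝ}
    {b : κ → ℝ} (ha : ∑ i ∈ s, a i = 1) (hb : ∑ j ∈ t, b j = 1) (g : κ → ℝ) (h : ι → ℝ) (c : ℝ) :
    ∑ i ∈ s, ∑ j ∈ t, a i * b j * (g j + h i - c) =
      ∑ j ∈ t, b j * g j + ∑ i ∈ s, a i * h i - c := by
  have key : ∀ i, ∑ j ∈ t, a i * b j * (g j + h i - c) =
      a i * ∑ j ∈ t, b j * g j + a i * h i - a i * c := by
    intro i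
    simp only [mul_add, mul_sub, sum_add_distrib, sum_sub_distrib, ← sum_mul, ← mul_sum, hb,
      mul_assoc]
    ring
  simp only [key, sum_sub_distrib, sum_add_distrib, ← sum_mul, ha]
  ring

def IsSubmodular {N : Type*} [DecidableEq N] (f : Finset N → ℝ) : Prop :=
  ∀ S T : Finset N, S ⊆ T → ∀ e ∉ T, f (insert e T) - f T ≤ f (insert e S) - f S

/-- The probability that a random subset of `A`, containing each element independently with
probability `p`, equals `B`. -/
def sampleProb {N : Type*} [DecidableEq N] (p : ℝ) (A B : Finset N) : ℝ :=
  p ^ #B * (1 - p) ^ #(A \ B)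

section sampleProb

variable {N : Type*} [DecidableEq N] {p : ℝ} {a : N} {A B : Finset N}

theorem sampleProb_nonneg (hp0 : 0 ≤ p) (hp1 : p ≤ 1) : 0 ≤ sampleProb p A B :=
  mul_nonneg (pow_nonneg hp0 _) (pow_nonneg (sub_nonneg.2 hp1) _)

theorem sum_sampleProb (p : ℝ) (A : Finset N) : ∑ B ∈ A.powerset, sampleProb p A B = 1 := by
  simpa [sampleProb] using (prod_add (fun _ ↦ p) (fun _ ↦ 1 - p) A).symm

theorem sampleProb_insert_left (haA : a ∉ A) (haB : a ∉ B) :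
    sampleProb p (insert a A) B = (1 - p) * sampleProb p A B := by
  rw [sampleProb, sampleProb, insert_sdiff_of_notMem _ haB,
    card_insert_of_notMem (fun h ↦ haA (mem_sdiff.1 h).1)]
  ring

theorem sampleProb_insert_insert (haA : a ∉ A) (haB : a ∉ B) :
    sampleProb p (insert a A) (insert a B) = p * sampleProb p A B := by
  rw [sampleProb, sampleProb, insert_sdiff_insert, sdiff_insert_of_notMem haA,
    card_insert_of_notMem haB]
  ring

end sampleProb

namespace IsSubmodular

variable {N : Type*} [DecidableEq N] {f : Finset N → ℝ}

theorem sub_le_sub_of_subset (hf : IsSubmodular f) {A B D : Finset N} (hAB : A ⊆ B)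
    (hD : Disjoint D B) : f (B ∪ D) - f B ≤ f (A ∪ D) - f A := by
  induction D using Finset.induction_on with
  | empty => simp
  | @insert e D he ih =>
    rw [disjoint_insert_left] at hD
    have := hf (A ∪ D) (B ∪ D) (union_subset_union_left hAB) e (by simp [hD.1, he])
    rw [union_insert, union_insert]
    linarith [ih hD.2]

theorem le_sum_sampleProb_mul (hf : IsSubmodular f) {p : ℝ} (hp0 : 0 ≤ p) (hp1 : p ≤ 1)
    {A C : Finset N} (hAC : Disjoint A C) :
    (1 - p) * f C + p * f (A ∪ C) ≤ ∑ B ∈ A.powerset, sampleProb p A B * f (B ∪ C) := by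
  induction A using Finset.induction_on generalizing C with
  | empty => simp [sampleProb, ← add_mul]
  | @insert a A ha ih =>
    rw [disjoint_insert_left] at hAC
    have haC : a ∉ A ∪ C := by simp [ha, hAC.1]
    have hAaC : Disjoint A (insert a C) := disjoint_insert_right.2 ⟨ha, hAC.2⟩
    have hsplit : ∑ B ∈ (insert a A).powerset, sampleProb p (insert a A) B * f (B ∪ C) =
        (1 - p) * ∑ B ∈ A.powerset, sampleProb p A B * f (B ∪ C) +
          p * ∑ B ∈ A.powerset, sampleProb p A B * f (B ∪ insert a C) := by
      rw [sum_powerset_insert ha, mul_sum, mul_sum]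
      congr 1 <;> refine sum_congr rfl fun B hB ↦ ?_
      · have haB : a ∉ B := fun h ↦ ha (mem_powerset.1 hB h)
        rw [sampleProb_insert_left ha haB]; ring
      · have haB : a ∉ B := fun h ↦ ha (mem_powerset.1 hB h)
        rw [sampleProb_insert_insert ha haB, insert_union, ← union_insert]; ring
    have hmarg := hf C (A ∪ C) subset_union_right a haC
    rw [← insert_union] at hmarg
    rw [hsplit]
    have h1 := mul_le_mul_of_nonneg_left (ih hAC.2) (sub_nonneg.2 hp1)
    have h2 := mul_le_mul_of_nonneg_left (ih hAaC) hp0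
    rw [union_insert, ← insert_union] at h2
    nlinarith [mul_nonneg hp0 (sub_nonneg.2 hp1)]

end IsSubmodular

section Decomposition

variable {N : Type*} [Fintype N] [DecidableEq N]

theorem sum_finset_eq_sum_powerset_sum_powerset_compl (S : Finset N)
    (h : Finset N → Finset N → ℝ) :
    ∑ T : Finset N, h (T ∩ S) (T \ S) = ∑ A ∈ S.powerset, ∑ B ∈ Sᶜ.powerset, h A B := by
  rw [← sum_product']
  refine sum_nbij' (fun T ↦ (T ∩ S, T \ S)) (fun q ↦ q.1 ∪ q.2) ?_ ?_ ?_ ?_ ?_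
  · intro T _
    simp only [mem_product, mem_powerset]
    exact ⟨inter_subset_right, fun u hu ↦ mem_compl.2 (mem_sdiff.1 hu).2⟩
  · simp
  · intro T _
    exact sup_inf_sdiff T S
  · rintro ⟨A, B⟩ hAB
    simp only [mem_product, mem_powerset, subset_compl_iff_disjoint_right] at hAB
    simp only [union_inter_distrib_right, inter_eq_left.2 hAB.1,
      disjoint_iff_inter_eq_empty.1 hAB.2, union_empty, union_sdiff_distrib,
      sdiff_eq_empty_iff_subset.2 hAB.1, hAB.2.sdiff_eq_left, empty_union]
  · intro T _
    simp

theorem multilinearExt_ite (f : Finset N → ℝ) (S : Finset N) (p q : ℝ) :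
    multilinearExt f (fun u ↦ if u ∈ S then q else p) =
      ∑ A ∈ S.powerset, ∑ B ∈ Sᶜ.powerset, sampleProb q S A * sampleProb p Sᶜ B * f (A ∪ B) := by
  rw [multilinearExt, ← sum_finset_eq_sum_powerset_sum_powerset_compl]
  refine sum_congr rfl fun T _ ↦ ?_
  have hT : T ∩ S ∪ T \ S = T := sup_inf_sdiff T S
  have h1 : S \ (T ∩ S) = Tᶜ ∩ S := by ext; simp only [mem_sdiff, mem_inter, mem_compl]; tauto
  have h2 : Sᶜ \ (T \ S) = Tᶜ \ S := by ext; simp only [mem_sdiff, mem_compl]; tauto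
  simp only [sampleProb, hT, h1, h2, apply_ite (HSub.hSub (1 : ℝ)), prod_ite,
    filter_mem_eq_inter, filter_notMem_eq_sdiff, prod_const]
  ring

end Decomposition

theorem stmt_6 {N : Type*} [Fintype N] [DecidableEq N] (f : Finset N → ℝ)
    (hsub : ∀ S T : Finset N, S ⊆ T → ∀ e ∉ T,
      f (insert e T) - f T ≤ f (insert e S) - f S)
    (hnn : ∀ S : Finset N, 0 ≤ f S)
    (S : Finset N) (δ : ℝ) (hδ : δ ∈ Set.Icc (0 : ℝ) (1 / 2)) :
    (1 - 2 * δ) * f S ≤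
      multilinearExt f (fun u => if u ∈ S then 1 - δ else δ) := by
  obtain ⟨hδ0, hδ1⟩ := hδ
  have hf : IsSubmodular f := hsub
  have hdown : (1 - δ) * f S ≤ ∑ A ∈ S.powerset, sampleProb (1 - δ) S A * f A := by
    have := hf.le_sum_sampleProb_mul (p := 1 - δ) (by linarith) (by linarith)
      (disjoint_empty_right S)
    simp only [union_empty, sub_sub_cancel] at this
    nlinarith [hnn ∅]
  have hup : (1 - δ) * f S ≤ ∑ B ∈ Sᶜ.powerset, sampleProb δ Sᶜ B * f (S ∪ B) := by
    have := hf.le_sum_sampleProb_mul hδ0 (by linarith) (disjoint_compl_left (a := S))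
    simp only [union_comm _ S] at this
    nlinarith [hnn (S ∪ Sᶜ)]
  rw [multilinearExt_ite]
  calc (1 - 2 * δ) * f S
      ≤ ∑ B ∈ Sᶜ.powerset, sampleProb δ Sᶜ B * f (S ∪ B) +
          ∑ A ∈ S.powerset, sampleProb (1 - δ) S A * f A - f S := by linarith
    _ = ∑ A ∈ S.powerset, ∑ B ∈ Sᶜ.powerset,
          sampleProb (1 - δ) S A * sampleProb δ Sᶜ B * (f (S ∪ B) + f A - f S) :=
        (sum_sum_mul_mul_add_sub (sum_sampleProb _ _) (sum_sampleProb _ _) _ _ _).symm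
    _ ≤ _ := by
      refine sum_le_sum fun A hA ↦ sum_le_sum fun B hB ↦ ?_
      rw [mem_powerset] at hA hB
      have hAB := hf.sub_le_sub_of_subset hA (subset_compl_iff_disjoint_right.1 hB)
      have hw := mul_nonneg (sampleProb_nonneg (p := 1 - δ) (A := S) (B := A) (by linarith)
        (by linarith)) (sampleProb_nonneg (p := δ) (A := Sᶜ) (B := B) hδ0 (by linarith))
      exact mul_le_mul_of_nonneg_left (by linarith) hw
end

section
/- Let f be a submodular set function on a finite ground set N with multilinear extension F. Let OPT ⊆ N, let Δ ∈ [0,1], and let x, y ∈ [0,1]^N satisfy y = x + Δ·1_N. For each u ∈ N set a_u := F(x with u-coordinate set to 1) − F(x with u-coordinate set to 0) and b_u := −(F(y with u-coordinate set to 1) − F(y with u-coordinate set to 0)), and let r_u := a_u/(a_u+b_u) if a_u > 0 and b_u > 0, r_u := 1 if a_u > 0 and b_u ≤ 0, and r_u := 0 if a_u ≤ 0. Then for every δ ∈ [0, Δ], setting x' := x + δ·r and y' := y − δ·(1_N − r), it holds that F((1_OPT ∨ x) ∧ y) − F((1_OPT ∨ x') ∧ y') ≤ δ · Σ_{u : a_u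 > 0 and b_u > 0} max(b_u·r_u, a_u·(1 − r_u)). -/
open Finset

/-!
The multilinear extension is affine in each coordinate, and its slope in coordinate `u` is the
multilinear extension of the marginal `S ↦ f (S ∪ {u}) - f (S \ {u})`. For submodular `f` these
marginals are antitone, so the slopes are antitone on the unit cube; in particular every slope at a
point between `x` and `y` lies between `-b u` and `a u`. Changing the coordinates of
`(1_OPT ∨ x) ∧ y` one at a time into those of `(1_OPT ∨ x') ∧ y'` moves coordinate `u` by
`δ * (1_OPT u - r u)`, so each step costs at most `δ * max (b u * r u) (a u * (1 - r u))`, and this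
maximum vanishes unless `a u` and `b u` are both positive.
-/

open Function

section MultilinearExtension

variable {N : Type*} [DecidableEq N]

def Submodular (f : Finset N → ℝ) : Prop :=
  ∀ S T : Finset N, S ⊆ T → ∀ e ∉ T, f (insert e T) - f T ≤ f (insert e S) - f S

def marginal (f : Finset N → ℝ) (u : N) (S : Finset N) : ℝ :=
  f (insert u S) - f (S.erase u)

lemma Submodular.antitone_marginal {f : Finset N → ℝ} (hf : Submodular f) (u : N) :
    Antitone (marginal f u) := by
  intro S T hST
  have h := hf (S.erase u) (T.erase u) (erase_subset_erase u hST) u (notMem_erase u T)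
  have hins : ∀ R : Finset N, insert u (R.erase u) = insert u R := fun R => by
    ext i; by_cases hi : i = u <;> simp [hi]
  simpa only [marginal, hins] using h

variable [Fintype N]

lemma multilinearExt_eq_sum_prod_ite (f : Finset N → ℝ) (w : N → ℝ) :
    multilinearExt f w = ∑ S, f S * ∏ i, if i ∈ S then w i else 1 - w i := by
  refine sum_congr rfl fun S _ => ?_
  rw [prod_ite]
  congr 3 <;> ext <;> simp

lemma multilinearExt_eq_sum_powerset_erase (f : Finset N → ℝ) (w : N → ℝ) (u : N) :
    multilinearExt f w = ∑ T ∈ (univ.erase u).powerset,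
      (f T * (1 - w u) + f (insert u T) * w u) *
        ∏ i ∈ univ.erase u, if i ∈ T then w i else 1 - w i := by
  set A := univ.erase u
  have hu : u ∉ A := notMem_erase u univ
  have huniv : (univ : Finset N) = insert u A := (insert_erase (mem_univ u)).symm
  rw [multilinearExt_eq_sum_prod_ite, ← powerset_univ, huniv, sum_powerset_insert hu,
    ← sum_add_distrib]
  refine sum_congr rfl fun T hT => ?_
  have huT : u ∉ T := fun h => hu (mem_powerset.mp hT h)
  have hins : ∏ i ∈ A, (if i ∈ insert u T then w i else 1 - w i)
      = ∏ i ∈ A, if i ∈ T then w i else 1 - w i :=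
    prod_congr rfl fun i hi => by simp only [mem_insert, ne_of_mem_erase hi, false_or]
  rw [prod_insert hu, prod_insert hu, hins, if_neg huT, if_pos (mem_insert_self u T)]
  ring

lemma multilinearExt_update_sub_update (f : Finset N → ℝ) (w : N → ℝ) (u : N) (s t : ℝ) :
    multilinearExt f (update w u s) - multilinearExt f (update w u t)
      = (s - t) * multilinearExt (marginal f u) w := by
  have hweight : ∀ (c : ℝ) (T : Finset N),
      ∏ i ∈ univ.erase u, (if i ∈ T then update w u c i else 1 - update w u c i)
        = ∏ i ∈ univ.erase u, if i ∈ T then w i else 1 - w i :=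
    fun c T => prod_congr rfl fun i hi => by rw [update_of_ne (ne_of_mem_erase hi)]
  simp only [multilinearExt_eq_sum_powerset_erase _ _ u, hweight, update_self, mul_sum,
    ← sum_sub_distrib]
  refine sum_congr rfl fun T hT => ?_
  have huT : u ∉ T := fun h => notMem_erase u univ (mem_powerset.mp hT h)
  simp only [marginal, insert_idem, erase_insert huT, erase_eq_of_notMem huT]
  ring

lemma multilinearExt_update_one_sub_update_zero (f : Finset N → ℝ) (w : N → ℝ) (u : N) :
    multilinearExt f (update w u 1) - multilinearExt f (update w u 0)
      = multilinearExt (marginal f u) w := by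
  rw [multilinearExt_update_sub_update, sub_zero, one_mul]

lemma multilinearExt_nonpos {g : Finset N → ℝ} (hg : ∀ S, g S ≤ 0) {w : N → ℝ}
    (hw : w ∈ Set.Icc 0 1) : multilinearExt g w ≤ 0 :=
  sum_nonpos fun S _ => mul_nonpos_of_nonpos_of_nonneg (hg S) <|
    mul_nonneg (prod_nonneg fun i _ => hw.1 i) (prod_nonneg fun i _ => sub_nonneg.2 (hw.2 i))

lemma multilinearExt_sub_piecewise (f : Finset N → ℝ) (p q : N → ℝ) (s : Finset N) :
    ∃ m : N → N → ℝ, (∀ u i, m u i = p i ∨ m u i = q i) ∧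
      multilinearExt f p - multilinearExt f (s.piecewise q p)
        = ∑ u ∈ s, (p u - q u) * multilinearExt (marginal f u) (m u) := by
  induction s using Finset.induction_on with
  | empty => exact ⟨fun _ => p, fun _ _ => Or.inl rfl, by simp⟩
  | @insert w s hw ih =>
    obtain ⟨m, hm, hsum⟩ := ih
    set M := s.piecewise q p
    refine ⟨update m w M, fun u i => ?_, ?_⟩
    · rcases eq_or_ne u w with rfl | hu
      · by_cases hi : i ∈ s <;> simp [M, hi]
      · rw [update_of_ne hu]; exact hm u i
    · have hMw : update M w (p w) = M := by
        rw [← piecewise_eq_of_notMem s q p hw]; exact update_eq_self w M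
      have hstep := multilinearExt_update_sub_update f M w (p w) (q w)
      rw [hMw] at hstep
      rw [piecewise_insert, sum_insert hw, update_self,
        sum_congr rfl fun u hu => by rw [update_of_ne (ne_of_mem_of_not_mem hu hw)], ← hsum,
        ← hstep]
      ring

lemma multilinearExt_sub_eq_sum (f : Finset N → ℝ) (p q : N → ℝ) :
    ∃ m : N → N → ℝ, (∀ u i, m u i = p i ∨ m u i = q i) ∧
      multilinearExt f p - multilinearExt f q
        = ∑ u, (p u - q u) * multilinearExt (marginal f u) (m u) := by
  simpa using multilinearExt_sub_piecewise f p q univ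

lemma multilinearExt_antitoneOn {g : Finset N → ℝ} (hg : Antitone g) :
    AntitoneOn (multilinearExt g) (Set.Icc 0 1) := by
  intro p hp q hq hpq
  obtain ⟨m, hm, hsum⟩ := multilinearExt_sub_eq_sum g q p
  have hm01 : ∀ u, m u ∈ Set.Icc 0 1 := fun u =>
    ⟨fun i => (hm u i).elim (· ▸ hq.1 i) (· ▸ hp.1 i),
      fun i => (hm u i).elim (· ▸ hq.2 i) (· ▸ hp.2 i)⟩
  have hmarg : ∀ u S, marginal g u S ≤ 0 := fun u S =>
    sub_nonpos.2 (hg ((erase_subset u S).trans (subset_insert u S)))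
  refine sub_nonpos.1 (hsum ▸ sum_nonpos fun u _ => ?_)
  exact mul_nonpos_of_nonneg_of_nonpos (sub_nonneg.2 (hpq u))
    (multilinearExt_nonpos (hmarg u) (hm01 u))

lemma Submodular.exists_multilinearExt_sub_eq_sum {f : Finset N → ℝ} (hf : Submodular f)
    {x y p q : N → ℝ} (hx : 0 ≤ x) (hy : y ≤ 1) (hp : p ∈ Set.Icc x y) (hq : q ∈ Set.Icc x y) :
    ∃ D : N → ℝ, (∀ u, D u ∈ Set.Icc (multilinearExt (marginal f u) y)
        (multilinearExt (marginal f u) x)) ∧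
      multilinearExt f p - multilinearExt f q = ∑ u, (p u - q u) * D u := by
  obtain ⟨m, hm, hsum⟩ := multilinearExt_sub_eq_sum f p q
  have hmx : ∀ u, x ≤ m u := fun u i => (hm u i).elim (· ▸ hp.1 i) (· ▸ hq.1 i)
  have hmy : ∀ u, m u ≤ y := fun u i => (hm u i).elim (· ▸ hp.2 i) (· ▸ hq.2 i)
  have hxy : x ≤ y := hp.1.trans hp.2
  have mem : ∀ z, x ≤ z → z ≤ y → z ∈ Set.Icc (0 : N → ℝ) 1 :=
    fun z hxz hzy => ⟨hx.trans hxz, hzy.trans hy⟩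
  refine ⟨fun u => multilinearExt (marginal f u) (m u), fun u => ⟨?_, ?_⟩, hsum⟩
  · exact multilinearExt_antitoneOn (hf.antitone_marginal u) (mem _ (hmx u) (hmy u))
      (mem _ hxy le_rfl) (hmy u)
  · exact multilinearExt_antitoneOn (hf.antitone_marginal u) (mem _ le_rfl hxy)
      (mem _ (hmx u) (hmy u)) (hmx u)

end MultilinearExtension

noncomputable def splitRatio (a b : ℝ) : ℝ :=
  if 0 < a ∧ 0 < b then a / (a + b) else if 0 < a then 1 else 0

lemma splitRatio_mem_Icc (a b : ℝ) : splitRatio a b ∈ Set.Icc 0 1 := by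
  unfold splitRatio
  split_ifs with hab
  · exact ⟨div_nonneg hab.1.le (by linarith), (div_le_one (by linarith)).2 (by linarith)⟩
  all_goals norm_num

lemma max_mul_splitRatio_eq_zero {a b r : ℝ} (hr : r = splitRatio a b)
    (hab : ¬(0 < a ∧ 0 < b)) : max (b * r) (a * (1 - r)) = 0 := by
  rw [hr, splitRatio, if_neg hab]
  split_ifs with ha
  · have hb : b ≤ 0 := not_lt.1 fun hb => hab ⟨ha, hb⟩
    simpa using hb
  · simpa using not_lt.1 ha

lemma mul_sub_mul_le_mul_max {c δ r a b D : ℝ} (hc : c = 0 ∨ c = 1) (hδ : 0 ≤ δ)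
    (hr : r ∈ Set.Icc 0 1) (hD : D ∈ Set.Icc (-b) a) :
    δ * (c - r) * D ≤ δ * max (b * r) (a * (1 - r)) := by
  obtain ⟨hr0, hr1⟩ := hr
  obtain ⟨hbD, hDa⟩ := hD
  rcases hc with rfl | rfl
  · nlinarith [le_max_left (b * r) (a * (1 - r)), mul_nonneg hδ hr0]
  · nlinarith [le_max_right (b * r) (a * (1 - r)), mul_nonneg hδ (sub_nonneg.2 hr1)]

lemma max_inf_eq_add_mul {c p q : ℝ} (hc : c = 0 ∨ c = 1) (hp : 0 ≤ p) (hpq : p ≤ q)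
    (hq : q ≤ 1) : max c p ⊓ q = p + c * (q - p) := by
  rcases hc with rfl | rfl <;> simp [*]

lemma max_inf_mem_Icc {c p q : ℝ} (hc : c = 0 ∨ c = 1) (hp : 0 ≤ p) (hpq : p ≤ q)
    (hq : q ≤ 1) : max c p ⊓ q ∈ Set.Icc p q := by
  rw [max_inf_eq_add_mul hc hp hpq hq]
  rcases hc with rfl | rfl <;> simp [hpq]

lemma max_inf_shift_mem_Icc {c x y Δ δ r : ℝ} (hc : c = 0 ∨ c = 1) (hx : 0 ≤ x) (hy : y ≤ 1)
    (hxy : y = x + Δ) (hδ : 0 ≤ δ) (hδΔ : δ ≤ Δ) (hr : r ∈ Set.Icc 0 1) :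
    max c (x + δ * r) ⊓ (y - δ * (1 - r)) ∈ Set.Icc x y := by
  have := max_inf_mem_Icc hc (p := x + δ * r) (q := y - δ * (1 - r))
    (by nlinarith [hr.1]) (by linarith) (by nlinarith [hr.2])
  constructor <;> nlinarith [this.1, this.2, hr.1, hr.2]

lemma max_inf_sub_max_inf_shift {c x y Δ δ r : ℝ} (hc : c = 0 ∨ c = 1) (hx : 0 ≤ x)
    (hy : y ≤ 1) (hxy : y = x + Δ) (hδ : 0 ≤ δ) (hδΔ : δ ≤ Δ) (hr : r ∈ Set.Icc 0 1) :
    max c x ⊓ y - max c (x + δ * r) ⊓ (y - δ * (1 - r)) = δ * (c - r) := by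
  subst hxy
  rw [max_inf_eq_add_mul hc hx (by linarith) hy, max_inf_eq_add_mul hc (by nlinarith [hr.1])
    (by linarith) (by nlinarith [hr.2])]
  ring

theorem stmt_14_general {N : Type*} [Fintype N] [DecidableEq N] (f : Finset N → ℝ)
    (hsub : ∀ S T : Finset N, S ⊆ T → ∀ e ∉ T,
      f (insert e T) - f T ≤ f (insert e S) - f S)
    (OPT : Finset N) (Δ : ℝ)
    (x y : N → ℝ) (hx : x ∈ Set.Icc (0 : N → ℝ) 1) (hy : y ∈ Set.Icc (0 : N → ℝ) 1)
    (hxy : ∀ u, y u = x u + Δ)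
    (a b r : N → ℝ)
    (ha : ∀ u, a u = multilinearExt f (Function.update x u 1)
      - multilinearExt f (Function.update x u 0))
    (hb : ∀ u, b u = -(multilinearExt f (Function.update y u 1)
      - multilinearExt f (Function.update y u 0)))
    (hr : ∀ u, r u = if 0 < a u ∧ 0 < b u then a u / (a u + b u)
      else if 0 < a u then 1 else 0)
    (δ : ℝ) (hδ : δ ∈ Set.Icc 0 Δ) :
    multilinearExt f (((fun u => if u ∈ OPT then (1 : ℝ) else 0) ⊔ x) ⊓ y) -
        multilinearExt f
          (((fun u => if u ∈ OPT then (1 : ℝ) else 0) ⊔ (x + δ • r)) ⊓ (y - δ • (1 - r))) ≤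
      δ * ∑ u ∈ univ.filter (fun u => 0 < a u ∧ 0 < b u),
        max (b u * r u) (a u * (1 - r u)) := by
  set c : N → ℝ := fun u => if u ∈ OPT then 1 else 0
  have hc : ∀ u, c u = 0 ∨ c u = 1 := fun u => by by_cases hu : u ∈ OPT <;> simp [c, hu]
  obtain ⟨hδ0, hδΔ⟩ := hδ
  have hr01 : ∀ u, r u ∈ Set.Icc 0 1 := fun u => hr u ▸ splitRatio_mem_Icc (a u) (b u)
  have hp : ∀ u, ((c ⊔ x) ⊓ y) u ∈ Set.Icc (x u) (y u) := fun u =>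
    max_inf_mem_Icc (hc u) (hx.1 u) (by linarith [hxy u]) (hy.2 u)
  have hq : ∀ u, ((c ⊔ (x + δ • r)) ⊓ (y - δ • (1 - r))) u ∈ Set.Icc (x u) (y u) := fun u =>
    max_inf_shift_mem_Icc (hc u) (hx.1 u) (hy.2 u) (hxy u) hδ0 hδΔ (hr01 u)
  obtain ⟨D, hD, hsum⟩ := Submodular.exists_multilinearExt_sub_eq_sum hsub hx.1 hy.2
    ⟨fun u => (hp u).1, fun u => (hp u).2⟩ ⟨fun u => (hq u).1, fun u => (hq u).2⟩
  have hDab : ∀ u, D u ∈ Set.Icc (-b u) (a u) := fun u => by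
    rw [ha u, hb u, neg_neg, multilinearExt_update_one_sub_update_zero,
      multilinearExt_update_one_sub_update_zero]
    exact hD u
  rw [hsum, mul_sum, sum_filter]
  refine sum_le_sum fun u _ => ?_
  have hstep : ((c ⊔ x) ⊓ y) u - ((c ⊔ (x + δ • r)) ⊓ (y - δ • (1 - r))) u = δ * (c u - r u) :=
    max_inf_sub_max_inf_shift (hc u) (hx.1 u) (hy.2 u) (hxy u) hδ0 hδΔ (hr01 u)
  rw [hstep]
  have hbound := mul_sub_mul_le_mul_max (hc u) hδ0 (hr01 u) (hDab u)
  split_ifs with hab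
  · exact hbound
  · rwa [max_mul_splitRatio_eq_zero (hr u) hab, mul_zero] at hbound

theorem stmt_14 {N : Type*} [Fintype N] [DecidableEq N] (f : Finset N → ℝ)
    (hsub : ∀ S T : Finset N, S ⊆ T → ∀ e ∉ T,
      f (insert e T) - f T ≤ f (insert e S) - f S)
    (OPT : Finset N) (Δ : ℝ) (hΔ : Δ ∈ Set.Icc (0 : ℝ) 1)
    (x y : N → ℝ) (hx : x ∈ Set.Icc (0 : N → ℝ) 1) (hy : y ∈ Set.Icc (0 : N → ℝ) 1)
    (hxy : ∀ u, y u = x u + Δ)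
    (a b r : N → ℝ)
    (ha : ∀ u, a u = multilinearExt f (Function.update x u 1)
      - multilinearExt f (Function.update x u 0))
    (hb : ∀ u, b u = -(multilinearExt f (Function.update y u 1)
      - multilinearExt f (Function.update y u 0)))
    (hr : ∀ u, r u = if 0 < a u ∧ 0 < b u then a u / (a u + b u)
      else if 0 < a u then 1 else 0)
    (δ : ℝ) (hδ : δ ∈ Set.Icc 0 Δ) :
    multilinearExt f (((fun u => if u ∈ OPT then (1 : ℝ) else 0) ⊔ x) ⊓ y) -
        multilinearExt f
          (((fun u => if u ∈ OPT then (1 : ℝ) else 0) ⊔ (x + δ • r)) ⊓ (y - δ • (1 - r))) ≤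
      δ * ∑ u ∈ univ.filter (fun u => 0 < a u ∧ 0 < b u),
        max (b u * r u) (a u * (1 - r u)) :=
  stmt_14_general f hsub OPT Δ x y hx hy hxy a b r ha hb hr δ hδ
end
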